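/- Let M, N, N_e be positive integers and σ₂², σ₃² > 0. For i = 1,…,M let W^{2,i} be a random N_e×N Gaussian matrix with entry variance σ₂² and W^{3,i} a random N×N_e Gaussian matrix with entry variance σ₃², with all 2M matrices jointly independent; let φ₁,…,φ_M be fixed real gating weights and v ∈ ℝ^N a fixed vector. Then the cross-expert aggregate A := (1/M) Σ_{i=1}^M φ_i W^{3,i} W^{2,i} v satisfies E[‖A‖₂²] = (1/M²) (Σ_{i=1}^M φ_i²) σ₂² σ₃² N N_e ‖v‖₂². In particular, under the MSSP Regime II scaling σ₂² = 1/N and σ₃² = M/N_e, this equals ((1/M) Σ_{i=1}^M φ_i²) ‖v‖₂², so the √M amplification of the expert-output initialization exactly compensates the 1/√M cross-expert central-limit cancellation. (Exact moment computation behind the cross-expert CLT of Mechanism A and the boost-and-cancel mechanism of MSSP in Regime II.) -/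

import Mathlib

/-!
Each coordinate of `Σ_i c_i W^{3,i} W^{2,i} v` is a combination `Σ_t c_t ξ_t` of the products
`ξ_t = W^{3,i}_{a e} W^{2,i}_{e j}`, `t = (i, e, j)`. Distinct indices `t ≠ t'` involve distinct
`W²` entries, so by independence and centering the `ξ_t` are orthogonal in `L²`, and
`E ξ_t² = σ₂² σ₃²`. Hence `E‖A‖²` is a Pythagorean sum in which only the diagonal terms survive;
in particular all cross-expert terms vanish.
-/

open MeasureTheory ProbabilityTheory Matrix
open scoped NNReal ENNReal

section Orthogonal

variable {Ω : Type*} [MeasurableSpace Ω] {P : Measure Ω}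

lemma integral_sq_sum_eq_of_orthogonal {κ : Type*} [Fintype κ] {ξ : κ → Ω → ℝ}
    (hξ : ∀ t, MemLp (ξ t) 2 P) (horth : Pairwise fun t t' => ∫ ω, ξ t ω * ξ t' ω ∂P = 0)
    (c : κ → ℝ) :
    ∫ ω, (∑ t, c t * ξ t ω) ^ 2 ∂P = ∑ t, c t ^ 2 * ∫ ω, ξ t ω ^ 2 ∂P := by
  have hint : ∀ t t', Integrable (fun ω => c t * c t' * (ξ t ω * ξ t' ω)) P :=
    fun t t' => ((hξ t).integrable_mul (hξ t')).const_mul _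
  calc ∫ ω, (∑ t, c t * ξ t ω) ^ 2 ∂P
      = ∫ ω, ∑ t, ∑ t', c t * c t' * (ξ t ω * ξ t' ω) ∂P := by
        congr 1 with ω
        rw [sq, Finset.sum_mul_sum]
        exact Finset.sum_congr rfl fun _ _ => Finset.sum_congr rfl fun _ _ => by ring
    _ = ∑ t, ∑ t', c t * c t' * ∫ ω, ξ t ω * ξ t' ω ∂P := by
        rw [integral_finsetSum _ fun t _ => integrable_finsetSum _ fun t' _ => hint t t']
        refine Finset.sum_congr rfl fun t _ => ?_
        rw [integral_finsetSum _ fun t' _ => hint t t']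
        simp only [integral_const_mul]
    _ = ∑ t, c t ^ 2 * ∫ ω, ξ t ω ^ 2 ∂P := by
        refine Finset.sum_congr rfl fun t _ => ?_
        rw [Finset.sum_eq_single t (fun t' _ h => by rw [horth (Ne.symm h), mul_zero])
          (by simp)]
        simp only [sq]

end Orthogonal

namespace ProbabilityTheory

lemma HasLaw.of_map_eq {Ω 𝓧 : Type*} [MeasurableSpace Ω] [MeasurableSpace 𝓧] {P : Measure Ω}
    {μ : Measure 𝓧} [IsProbabilityMeasure μ] {X : Ω → 𝓧} (h : P.map X = μ) :
    HasLaw X μ P :=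
  ⟨.of_map_ne_zero (h ▸ IsProbabilityMeasure.ne_zero μ), h⟩

section Gaussian

variable {Ω : Type*} [MeasurableSpace Ω] {P : Measure Ω} {Y : Ω → ℝ} {μ : ℝ} {v : ℝ≥0}

lemma HasLaw.memLp_of_gaussianReal (hY : HasLaw Y (gaussianReal μ v) P) {p : ℝ≥0∞}
    (hp : p ≠ ⊤) : MemLp Y p P := by
  have h := memLp_id_gaussianReal' (μ := μ) (v := v) p hp
  rw [← hY.map_eq] at h
  exact h.comp_of_map hY.aemeasurable

lemma HasLaw.integral_of_gaussianReal (hY : HasLaw Y (gaussianReal μ v) P) : P[Y] = μ := by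
  rw [hY.integral_eq, integral_id_gaussianReal]

lemma HasLaw.integral_sq_of_gaussianReal (hY : HasLaw Y (gaussianReal 0 v) P) :
    ∫ ω, Y ω ^ 2 ∂P = v := by
  rw [← variance_of_integral_eq_zero hY.aemeasurable hY.integral_of_gaussianReal,
    hY.variance_eq, variance_id_gaussianReal]

end Gaussian

section IndependentFamily

variable {Ω ι : Type*} [MeasurableSpace Ω] {P : Measure Ω} {X : ι → Ω → ℝ}

lemma iIndepFun.integral_mul_eq_zero (hX : iIndepFun X P) (hmeas : ∀ u, AEMeasurable (X u) P)
    (hmean : ∀ u, P[X u] = 0) {u u' : ι} (h : u ≠ u') : ∫ ω, X u ω * X u' ω ∂P = 0 := by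
  have := (hX.indepFun h).integral_mul_eq_mul_integral (hmeas u).aestronglyMeasurable
    (hmeas u').aestronglyMeasurable
  simpa [hmean] using this

lemma iIndepFun.integral_mul_mul_mul (hX : iIndepFun X P) (hmeas : ∀ u, AEMeasurable (X u) P)
    {i j k l : ι} (hik : i ≠ k) (hil : i ≠ l) (hjk : j ≠ k) (hjl : j ≠ l) :
    ∫ ω, X i ω * X j ω * (X k ω * X l ω) ∂P
      = (∫ ω, X i ω * X j ω ∂P) * ∫ ω, X k ω * X l ω ∂P :=
  (hX.indepFun_mul_mul₀ hmeas i j k l hik hil hjk hjl).integral_mul_eq_mul_integral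
    ((hmeas i).mul (hmeas j)).aestronglyMeasurable ((hmeas k).mul (hmeas l)).aestronglyMeasurable

lemma IndepFun.memLp_two_mul {Y Z : Ω → ℝ} (hYZ : IndepFun Y Z P) (hY : MemLp Y 2 P)
    (hZ : MemLp Z 2 P) : MemLp (fun ω => Y ω * Z ω) 2 P := by
  refine (memLp_two_iff_integrable_sq (f := fun ω => Y ω * Z ω) (hY.1.mul hZ.1)).2 ?_
  simp only [mul_pow]
  exact (hYZ.comp (measurable_id.pow_const 2) (measurable_id.pow_const 2)).integrable_mul
    hY.integrable_sq hZ.integrable_sq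

end IndependentFamily

end ProbabilityTheory

lemma Matrix.sum_smul_mul_mulVec_apply {ι m k n : Type*} [Fintype ι] [Fintype k] [Fintype n]
    (c : ι → ℝ) (A : ι → Matrix m k ℝ) (B : ι → Matrix k n ℝ) (v : n → ℝ) (a : m) :
    (∑ i, c i • (A i * B i) *ᵥ v) a
      = ∑ t : ι × k × n, c t.1 * v t.2.2 * (A t.1 a t.2.1 * B t.1 t.2.1 t.2.2) := by
  simp only [Finset.sum_apply, Pi.smul_apply, smul_eq_mul, mulVec, dotProduct, mul_apply,
    Fintype.sum_prod_type, Finset.mul_sum, Finset.sum_mul]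
  refine Finset.sum_congr rfl fun i _ => ?_
  rw [Finset.sum_comm]
  exact Finset.sum_congr rfl fun _ _ => Finset.sum_congr rfl fun _ _ => by ring

def entryFamily {Ω ι m k n : Type*} (W2 : ι → Ω → Matrix k n ℝ) (W3 : ι → Ω → Matrix m k ℝ) :
    (ι × k × n) ⊕ (ι × m × k) → Ω → ℝ :=
  Sum.elim (fun p ω => W2 p.1 ω p.2.1 p.2.2) (fun p ω => W3 p.1 ω p.2.1 p.2.2)

theorem integral_sum_sq_sum_smul_mul_mulVec {Ω ι m k n : Type*} [MeasurableSpace Ω]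
    {P : Measure Ω} [Fintype ι] [Fintype m] [Fintype k] [Fintype n]
    {W2 : ι → Ω → Matrix k n ℝ} {W3 : ι → Ω → Matrix m k ℝ} {σ2 σ3 : ℝ≥0}
    (hindep : iIndepFun (entryFamily W2 W3) P)
    (hlaw2 : ∀ i e j, P.map (fun ω => W2 i ω e j) = gaussianReal 0 σ2)
    (hlaw3 : ∀ i a e, P.map (fun ω => W3 i ω a e) = gaussianReal 0 σ3)
    (c : ι → ℝ) (v : n → ℝ) :
    ∫ ω, ∑ a, ((∑ i, c i • (W3 i ω * W2 i ω) *ᵥ v) a) ^ 2 ∂P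
      = (∑ i, c i ^ 2) * σ2 * σ3 * Fintype.card m * Fintype.card k * ∑ j, v j ^ 2 := by
  set X := entryFamily W2 W3
  have hlaw : ∀ u, HasLaw (X u) (gaussianReal 0 (Sum.elim (fun _ => σ2) (fun _ => σ3) u)) P := by
    rintro (⟨i, e, j⟩ | ⟨i, a, e⟩)
    exacts [HasLaw.of_map_eq (hlaw2 i e j), HasLaw.of_map_eq (hlaw3 i a e)]
  have hmeas : ∀ u, AEMeasurable (X u) P := fun u => (hlaw u).aemeasurable
  have hmean : ∀ u, P[X u] = 0 := fun u => (hlaw u).integral_of_gaussianReal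
  let ξ (a : m) (t : ι × k × n) (ω : Ω) : ℝ := X (.inr (t.1, a, t.2.1)) ω * X (.inl t) ω
  have hξ : ∀ a t, MemLp (ξ a t) 2 P := fun a t =>
    (hindep.indepFun (by simp)).memLp_two_mul ((hlaw _).memLp_of_gaussianReal (by simp))
      ((hlaw _).memLp_of_gaussianReal (by simp))
  have hξξ : ∀ a t t', ∫ ω, ξ a t ω * ξ a t' ω ∂P
      = (∫ ω, X (.inr (t.1, a, t.2.1)) ω * X (.inr (t'.1, a, t'.2.1)) ω ∂P)
        * ∫ ω, X (.inl t) ω * X (.inl t') ω ∂P := fun a t t' => by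
    rw [← hindep.integral_mul_mul_mul hmeas (by simp) (by simp) (by simp) (by simp)]
    exact integral_congr_ae (ae_of_all _ fun ω => by simp only [ξ]; ring)
  have horth : ∀ a, Pairwise fun t t' => ∫ ω, ξ a t ω * ξ a t' ω ∂P = 0 := fun a t t' h => by
    dsimp only
    rw [hξξ, hindep.integral_mul_eq_zero hmeas hmean (Sum.inl_injective.ne h), mul_zero]
  have hsq : ∀ a t, ∫ ω, ξ a t ω ^ 2 ∂P = σ3 * σ2 := fun a t => by
    simp_rw [sq, hξξ, ← sq]
    rw [(hlaw _).integral_sq_of_gaussianReal, (hlaw _).integral_sq_of_gaussianReal]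
    rfl
  calc ∫ ω, ∑ a, ((∑ i, c i • (W3 i ω * W2 i ω) *ᵥ v) a) ^ 2 ∂P
      = ∑ a, ∫ ω, (∑ t : ι × k × n, c t.1 * v t.2.2 * ξ a t ω) ^ 2 ∂P := by
        simp_rw [Matrix.sum_smul_mul_mulVec_apply]
        exact integral_finsetSum _ fun a _ =>
          (memLp_finsetSum _ fun t _ => (hξ a t).const_mul _).integrable_sq
    _ = ∑ a : m, ∑ t : ι × k × n, (c t.1 * v t.2.2) ^ 2 * (σ3 * σ2) := by
        simp only [integral_sq_sum_eq_of_orthogonal (hξ _) (horth _), hsq]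
    _ = (∑ i, c i ^ 2) * σ2 * σ3 * Fintype.card m * Fintype.card k * ∑ j, v j ^ 2 := by
        simp only [Fintype.sum_prod_type, Finset.sum_const, Finset.card_univ, nsmul_eq_mul,
          mul_pow, ← Finset.sum_mul, ← Finset.mul_sum]
        ring

theorem stmt_10_general {Ω : Type*} [MeasurableSpace Ω] (P : Measure Ω)
    (M N Ne : ℕ) (hN : 0 < N) (hNe : 0 < Ne)
    (σ2 σ3 : ℝ≥0)
    (W2 : Fin M → Ω → Matrix (Fin Ne) (Fin N) ℝ)
    (W3 : Fin M → Ω → Matrix (Fin N) (Fin Ne) ℝ)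
    (hindep : iIndepFun
      (Sum.elim (fun (p : Fin M × Fin Ne × Fin N) (ω : Ω) => W2 p.1 ω p.2.1 p.2.2)
                (fun (p : Fin M × Fin N × Fin Ne) (ω : Ω) => W3 p.1 ω p.2.1 p.2.2)) P)
    (hlaw2 : ∀ i a b, Measure.map (fun ω => W2 i ω a b) P = gaussianReal 0 σ2)
    (hlaw3 : ∀ i a b, Measure.map (fun ω => W3 i ω a b) P = gaussianReal 0 σ3)
    (φ : Fin M → ℝ) (v : Fin N → ℝ) :
    (∫ ω, (∑ a, (((M : ℝ)⁻¹ • ∑ i, φ i • (W3 i ω * W2 i ω).mulVec v) a) ^ 2) ∂P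
        = ((M : ℝ) ^ 2)⁻¹ * (∑ i, φ i ^ 2) * (σ2 : ℝ) * (σ3 : ℝ) * (N : ℝ) * (Ne : ℝ)
            * ∑ j, v j ^ 2) ∧
    ((σ2 : ℝ) = 1 / (N : ℝ) → (σ3 : ℝ) = (M : ℝ) / (Ne : ℝ) →
      ∫ ω, (∑ a, (((M : ℝ)⁻¹ • ∑ i, φ i • (W3 i ω * W2 i ω).mulVec v) a) ^ 2) ∂P
        = ((M : ℝ)⁻¹ * ∑ i, φ i ^ 2) * ∑ j, v j ^ 2) := by
  have hmoment : ∫ ω, (∑ a, (((M : ℝ)⁻¹ • ∑ i, φ i • (W3 i ω * W2 i ω).mulVec v) a) ^ 2) ∂P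
      = ((M : ℝ) ^ 2)⁻¹ * (∑ i, φ i ^ 2) * (σ2 : ℝ) * (σ3 : ℝ) * (N : ℝ) * (Ne : ℝ)
          * ∑ j, v j ^ 2 := by
    have h := integral_sum_sq_sum_smul_mul_mulVec (W2 := W2) (W3 := W3) hindep hlaw2 hlaw3
      (fun i => (M : ℝ)⁻¹ * φ i) v
    simp only [Finset.smul_sum, smul_smul, mul_pow, ← Finset.mul_sum, Fintype.card_fin] at h ⊢
    rw [h, inv_pow]
  refine ⟨hmoment, fun h2 h3 => ?_⟩
  rw [hmoment, h2, h3]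
  field_simp

/-- For jointly independent Gaussian matrices `W^{2,i}` (size `N_e × N`,
entry variance `σ₂²`) and `W^{3,i}` (size `N × N_e`, entry variance `σ₃²`), fixed gating
weights `φ_i` and a fixed vector `v ∈ ℝ^N`, the cross-expert aggregate
`A := (1/M) Σ_i φ_i W^{3,i} W^{2,i} v` satisfies
`E[‖A‖₂²] = (1/M²) (Σ_i φ_i²) σ₂² σ₃² N N_e ‖v‖₂²`; in particular, under the MSSP
Regime II scaling `σ₂² = 1/N`, `σ₃² = M/N_e`, this equals `((1/M) Σ_i φ_i²) ‖v‖₂²`. -/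
theorem stmt_10 {Ω : Type*} [MeasurableSpace Ω] (P : Measure Ω) [IsProbabilityMeasure P]
    (M N Ne : ℕ) (hM : 0 < M) (hN : 0 < N) (hNe : 0 < Ne)
    (σ2 σ3 : ℝ≥0) (hσ2 : 0 < σ2) (hσ3 : 0 < σ3)
    (W2 : Fin M → Ω → Matrix (Fin Ne) (Fin N) ℝ)
    (W3 : Fin M → Ω → Matrix (Fin N) (Fin Ne) ℝ)
    (hmeas2 : ∀ i a b, Measurable fun ω => W2 i ω a b)
    (hmeas3 : ∀ i a b, Measurable fun ω => W3 i ω a b)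
    (hindep : iIndepFun
      (Sum.elim (fun (p : Fin M × Fin Ne × Fin N) (ω : Ω) => W2 p.1 ω p.2.1 p.2.2)
                (fun (p : Fin M × Fin N × Fin Ne) (ω : Ω) => W3 p.1 ω p.2.1 p.2.2)) P)
    (hlaw2 : ∀ i a b, Measure.map (fun ω => W2 i ω a b) P = gaussianReal 0 σ2)
    (hlaw3 : ∀ i a b, Measure.map (fun ω => W3 i ω a b) P = gaussianReal 0 σ3)
    (φ : Fin M → ℝ) (v : Fin N → ℝ) :
    (∫ ω, (∑ a, (((M : ℝ)⁻¹ • ∑ i, φ i • (W3 i ω * W2 i ω).mulVec v) a) ^ 2) ∂P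
        = ((M : ℝ) ^ 2)⁻¹ * (∑ i, φ i ^ 2) * (σ2 : ℝ) * (σ3 : ℝ) * (N : ℝ) * (Ne : ℝ)
            * ∑ j, v j ^ 2) ∧
    ((σ2 : ℝ) = 1 / (N : ℝ) → (σ3 : ℝ) = (M : ℝ) / (Ne : ℝ) →
      ∫ ω, (∑ a, (((M : ℝ)⁻¹ • ∑ i, φ i • (W3 i ω * W2 i ω).mulVec v) a) ^ 2) ∂P
        = ((M : ℝ)⁻¹ * ∑ i, φ i ^ 2) * ∑ j, v j ^ 2) :=
  stmt_10_general P M N Ne hN hNe σ2 σ3 W2 W3 hindep hlaw2 hlaw3 φ v
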